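/- arXiv:0911.2589 — 5 statements merged into one kernel-verified Lean document; each statement's English description precedes it below -/
import Mathlib

section
/- For every n ≥ 2 there is no cut-continuous mapping from K_{n+2} to K_n. -/
attribute [local instance] Classical.propDecidable

/-- A cut in a graph: the set of edges leaving some vertex set `W`. -/
def IsCut {V : Type*} (G : SimpleGraph V) (X : Set (Sym2 V)) : Prop :=
  ∃ W : Set V, X = {e | e ∈ G.edgeSet ∧ ∃ a b, e = s(a, b) ∧ a ∈ W ∧ b ∉ W}

/-- An `n/k`-cover: `n` cuts covering every edge at least `k` times. -/
def HasCover {V : Type*} (G : SimpleGraph V) (n k : ℕ) : Prop :=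
  ∃ X : Fin n → Set (Sym2 V), (∀ i, IsCut G (X i)) ∧
    ∀ e ∈ G.edgeSet, k ≤ (Finset.univ.filter fun i => e ∈ X i).card

/-- The fractional cut-covering number `x(G)`. -/
noncomputable def cutCover {V : Type*} (G : SimpleGraph V) : ℝ :=
  sInf { q : ℝ | ∃ n k : ℕ, 0 < k ∧ q = n / k ∧ HasCover G n k }

/-- A mapping on edge sets is cut-continuous if the preimage of every cut is a cut. -/
def CutContinuous {V W : Type*} (G : SimpleGraph V) (H : SimpleGraph W)
    (f : G.edgeSet → H.edgeSet) : Prop :=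
  ∀ U : Set (Sym2 W), IsCut H U →
    IsCut G {e | ∃ h : e ∈ G.edgeSet, (f ⟨e, h⟩ : Sym2 W) ∈ U}

/-!
Taking preimages under a cut-continuous map `G → H` turns an `N/K`-cover of `H` into one of `G`.
A cut of `K_m` has at most `⌊m/2⌋⌈m/2⌉` edges, so double counting gives
`N/K ≥ C(m,2)/(⌊m/2⌋⌈m/2⌉)` for every cover of `K_m`, and the cuts `δ(W)` over all `W` with
`|W| = ⌊m/2⌋` attain this ratio. The ratio is strictly larger for `m = n + 2` than for `m = n`,
so the optimal cover of `K_n` cannot be pulled back to `K_{n+2}`.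
-/

open Finset

def cutSet {V : Type*} (G : SimpleGraph V) (W : Set V) : Set (Sym2 V) :=
  {e | e ∈ G.edgeSet ∧ ∃ a b, e = s(a, b) ∧ a ∈ W ∧ b ∉ W}

lemma HasCover.of_cutContinuous {V W : Type*} {G : SimpleGraph V} {H : SimpleGraph W}
    {f : G.edgeSet → H.edgeSet} (hf : CutContinuous G H f) {N K : ℕ}
    (h : HasCover H N K) : HasCover G N K := by
  obtain ⟨X, hX, hcov⟩ := h
  refine ⟨fun i => {e | ∃ h : e ∈ G.edgeSet, (f ⟨e, h⟩ : Sym2 W) ∈ X i},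
    fun i => hf _ (hX i), fun e he => (hcov _ (f ⟨e, he⟩).2).trans (card_le_card ?_)⟩
  intro i hi
  simp only [mem_filter, mem_univ, true_and, Set.mem_ofPred_eq] at hi ⊢
  exact ⟨he, hi⟩

lemma HasCover.card_edgeFinset_mul_le {V : Type*} {G : SimpleGraph V} [Fintype G.edgeSet]
    {N K c : ℕ} (h : HasCover G N K)
    (hc : ∀ X, IsCut G X → #{e ∈ G.edgeFinset | e ∈ X} ≤ c) :
    #G.edgeFinset * K ≤ N * c := by
  obtain ⟨X, hX, hcov⟩ := h
  simpa using card_mul_le_card_mul (fun e i => e ∈ X i)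
    (fun e he => hcov e (SimpleGraph.mem_edgeFinset.mp he)) (fun i _ => hc _ (hX i))

lemma hasCover_of_le_card_filter {V : Type*} (G : SimpleGraph V) (T : Finset (Finset V))
    (K : ℕ) (h : ∀ e ∈ G.edgeSet, K ≤ #(T.filter fun W : Finset V => e ∈ cutSet G (W : Set V))) :
    HasCover G #T K := by
  refine ⟨fun i => cutSet G (T.equivFin.symm i : Finset V), fun i => ⟨_, rfl⟩,
    fun e he => (h e he).trans_eq ?_⟩
  refine card_bij' (fun (W : Finset V) hW => T.equivFin ⟨W, (mem_filter.mp hW).1⟩)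
    (fun i _ => T.equivFin.symm i) ?_ ?_ ?_ ?_ <;> simp +contextual

lemma card_filter_powersetCard_mem_notMem {α : Type*} {s : Finset α} {a b : α}
    (ha : a ∈ s) (hb : b ∈ s) (hab : a ≠ b) (k : ℕ) :
    #{W ∈ powersetCard (k + 1) s | a ∈ W ∧ b ∉ W} = (#s - 2).choose k := by
  have hcard : #((s.erase a).erase b) = #s - 2 := by
    rw [card_erase_of_mem (by simp [hab.symm, hb]), card_erase_of_mem ha]; omega
  rw [← hcard, ← card_powersetCard]
  refine card_nbij' (·.erase a) (insert a) ?_ ?_ ?_ ?_ <;>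
  · intro W hW
    simp only [SetLike.mem_coe, coe_filter, Set.mem_ofPred_eq, mem_powersetCard] at hW ⊢
    grind

def completeMaxCut (m : ℕ) : ℕ := m / 2 * (m - m / 2)

lemma mul_sub_le_completeMaxCut (w m : ℕ) : w * (m - w) ≤ completeMaxCut m := by
  rcases le_or_gt w m with hw | hw
  · obtain ⟨a, rfl | rfl⟩ := Nat.even_or_odd' m
    · rw [completeMaxCut, show 2 * a / 2 = a by omega, show 2 * a - a = a by omega]
      zify [hw]
      nlinarith [sq_nonneg ((w : ℤ) - a)]
    · rw [completeMaxCut, show (2 * a + 1) / 2 = a by omega, show 2 * a + 1 - a = a + 1 by omega]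
      zify [hw]
      nlinarith [sq_nonneg ((w : ℤ) - a)]
  · simp [Nat.sub_eq_zero_of_le hw.le]

lemma mk_mem_cutSet_top_iff {V : Type*} {a b : V} (hab : a ≠ b) (W : Set V) :
    s(a, b) ∈ cutSet (⊤ : SimpleGraph V) W ↔ a ∈ W ∧ b ∉ W ∨ b ∈ W ∧ a ∉ W := by
  constructor
  · rintro ⟨-, c, d, hcd, hc, hd⟩
    rcases Sym2.eq_iff.mp hcd with ⟨rfl, rfl⟩ | ⟨rfl, rfl⟩
    exacts [.inl ⟨hc, hd⟩, .inr ⟨hc, hd⟩]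
  · rintro (⟨ha, hb⟩ | ⟨ha, hb⟩)
    · exact ⟨by simpa using hab, a, b, rfl, ha, hb⟩
    · exact ⟨by simpa using hab, b, a, Sym2.eq_swap, ha, hb⟩

section CompleteGraph

variable {V : Type*} [Fintype V]

lemma card_cutSet_top (W : Finset V) :
    #{e ∈ (⊤ : SimpleGraph V).edgeFinset | e ∈ cutSet ⊤ (W : Set V)} =
      #W * (Fintype.card V - #W) := by
  have himage : {e ∈ (⊤ : SimpleGraph V).edgeFinset | e ∈ cutSet ⊤ (W : Set V)} =
      (W ×ˢ Wᶜ).image fun p => s(p.1, p.2) := by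
    ext e
    induction e using Sym2.ind with
    | _ a b =>
      by_cases hab : a = b
      · subst hab; simp
      · simp only [mem_filter, SimpleGraph.mem_edgeFinset, SimpleGraph.mem_edgeSet,
          SimpleGraph.top_adj, mk_mem_cutSet_top_iff hab, mem_coe, mem_image, mem_product,
          mem_compl, Prod.exists, Sym2.eq_iff]
        grind
  rw [himage, card_image_of_injOn, card_product, card_compl]
  rintro ⟨a, b⟩ hab ⟨c, d⟩ hcd h
  simp only [coe_product, coe_compl, Set.mem_prod, Set.mem_compl_iff, mem_coe] at hab hcd
  rcases Sym2.eq_iff.mp h with ⟨rfl, rfl⟩ | ⟨rfl, rfl⟩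
  · rfl
  · exact absurd hcd.1 hab.2

lemma IsCut.card_le_completeMaxCut {X : Set (Sym2 V)} (hX : IsCut ⊤ X) :
    #{e ∈ (⊤ : SimpleGraph V).edgeFinset | e ∈ X} ≤ completeMaxCut (Fintype.card V) := by
  obtain ⟨W, rfl⟩ := hX
  have := card_cutSet_top W.toFinset
  rw [Set.coe_toFinset] at this
  exact this.trans_le (mul_sub_le_completeMaxCut _ _)

lemma card_filter_powersetCard_cutSet_top {a b : V} (hab : a ≠ b) (k : ℕ) :
    #((powersetCard (k + 1) univ).filter fun W : Finset V => s(a, b) ∈ cutSet ⊤ (W : Set V)) =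
      2 * (Fintype.card V - 2).choose k := by
  simp_rw [mk_mem_cutSet_top_iff hab, mem_coe, filter_or]
  rw [card_union_of_disjoint (disjoint_filter.mpr fun W _ h h' => h.2 h'.1),
    card_filter_powersetCard_mem_notMem (mem_univ a) (mem_univ b) hab,
    card_filter_powersetCard_mem_notMem (mem_univ b) (mem_univ a) hab.symm, card_univ, two_mul]

lemma hasCover_top (k : ℕ) :
    HasCover (⊤ : SimpleGraph V) ((Fintype.card V).choose (k + 1))
      (2 * (Fintype.card V - 2).choose k) := by
  have := hasCover_of_le_card_filter ⊤ (powersetCard (k + 1) univ)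
    (2 * (Fintype.card V - 2).choose k) fun e he => by
      induction e using Sym2.ind with
      | _ a b => exact (card_filter_powersetCard_cutSet_top (by simpa using he) k).ge
  rwa [card_powersetCard, card_univ] at this

lemma card_edgeFinset_top_mul_eq (k : ℕ) :
    #(⊤ : SimpleGraph V).edgeFinset * (2 * (Fintype.card V - 2).choose k) =
      (Fintype.card V).choose (k + 1) * ((k + 1) * (Fintype.card V - (k + 1))) := by
  have := card_mul_eq_card_mul (s := (⊤ : SimpleGraph V).edgeFinset)
    (t := powersetCard (k + 1) univ) (fun e (W : Finset V) => e ∈ cutSet ⊤ (W : Set V))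
    (m := 2 * (Fintype.card V - 2).choose k) (n := (k + 1) * (Fintype.card V - (k + 1)))
    (fun e he => by
      induction e using Sym2.ind with
      | _ a b => exact card_filter_powersetCard_cutSet_top (by simpa using he) k)
    (fun W hW => by
      rw [← (mem_powersetCard.mp hW).2]
      exact card_cutSet_top W)
  rwa [card_powersetCard, card_univ] at this

lemma HasCover.choose_two_div_le_top {N K : ℕ}
    (h : HasCover (⊤ : SimpleGraph V) N K) (hK : 0 < K) :
    ((Fintype.card V).choose 2 : ℚ) / completeMaxCut (Fintype.card V) ≤ N / K := by
  have hle := h.card_edgeFinset_mul_le fun _ => IsCut.card_le_completeMaxCut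
  rw [SimpleGraph.card_edgeFinset_top_eq_card_choose_two] at hle
  rcases Nat.eq_zero_or_pos (completeMaxCut (Fintype.card V)) with h0 | hpos
  · rw [h0, Nat.cast_zero, div_zero]
    positivity
  · rw [div_le_div_iff₀ (by exact_mod_cast hpos) (by exact_mod_cast hK)]
    exact_mod_cast hle

lemma exists_hasCover_top_div_eq (hV : 2 ≤ Fintype.card V) :
    ∃ N K : ℕ, 0 < K ∧ HasCover (⊤ : SimpleGraph V) N K ∧
      (N : ℚ) / K = (Fintype.card V).choose 2 / completeMaxCut (Fintype.card V) := by
  obtain ⟨k, hk⟩ : ∃ k, Fintype.card V / 2 = k + 1 := ⟨Fintype.card V / 2 - 1, by omega⟩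
  have hK : 0 < 2 * (Fintype.card V - 2).choose k :=
    Nat.mul_pos two_pos (Nat.choose_pos (by omega))
  have hmax : completeMaxCut (Fintype.card V) = (k + 1) * (Fintype.card V - (k + 1)) := by
    rw [completeMaxCut, hk]
  have hmax_pos : 0 < completeMaxCut (Fintype.card V) := by
    rw [hmax]; exact Nat.mul_pos k.succ_pos (by omega)
  refine ⟨_, _, hK, hasCover_top k, ?_⟩
  rw [div_eq_div_iff (by exact_mod_cast hK.ne') (by exact_mod_cast hmax_pos.ne'), hmax,
    ← SimpleGraph.card_edgeFinset_top_eq_card_choose_two]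
  exact_mod_cast (card_edgeFinset_top_mul_eq k).symm

end CompleteGraph

lemma choose_two_div_completeMaxCut_lt {n : ℕ} (hn : 2 ≤ n) :
    (n.choose 2 : ℚ) / completeMaxCut n < (n + 2).choose 2 / completeMaxCut (n + 2) := by
  have hpos : ∀ m, 2 ≤ m → (0 : ℚ) < completeMaxCut m := fun m hm => by
    unfold completeMaxCut; exact_mod_cast Nat.mul_pos (by omega) (by omega)
  rw [div_lt_div_iff₀ (hpos n hn) (hpos (n + 2) (by omega)), completeMaxCut, completeMaxCut,
    show (n + 2) / 2 = n / 2 + 1 by omega, show n + 2 - (n / 2 + 1) = n - n / 2 + 1 by omega]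
  have hn' : (2 : ℚ) ≤ n := by exact_mod_cast hn
  have hsum : ((n / 2 : ℕ) : ℚ) + (n - n / 2 : ℕ) = n := by
    rw [← Nat.cast_add]; congr 1; omega
  have hbalanced : (n : ℚ) ^ 2 - 1 ≤ 4 * (n / 2 : ℕ) * (n - n / 2 : ℕ) := by
    rw [← hsum]
    rcases (by omega : n - n / 2 = n / 2 ∨ n - n / 2 = n / 2 + 1) with h | h <;>
    · rw [h]; push_cast; nlinarith
  push_cast [Nat.cast_choose_two]
  nlinarith

/-- There is no cut-continuous mapping from `K_{n+2}` to `K_n`. -/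
theorem no_cutContinuous_complete (n : ℕ) (hn : 2 ≤ n) :
    ¬ ∃ f : (⊤ : SimpleGraph (Fin (n + 2))).edgeSet → (⊤ : SimpleGraph (Fin n)).edgeSet,
      CutContinuous (⊤ : SimpleGraph (Fin (n + 2))) (⊤ : SimpleGraph (Fin n)) f := by
  rintro ⟨f, hf⟩
  obtain ⟨N, K, hK, hcover, hratio⟩ := exists_hasCover_top_div_eq (V := Fin n) (by simpa)
  have hle := (hcover.of_cutContinuous hf).choose_two_div_le_top hK
  simp only [Fintype.card_fin] at hle hratio
  exact (choose_two_div_completeMaxCut_lt hn).not_ge (hle.trans_eq hratio)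
end

section
/- For integers 0 < 2k ≤ n, the bipartite density of the Kneser graph satisfies b(K(n,k)) ≥ 2k/n. -/
attribute [local instance] Classical.propDecidable

/-- The maximum size of a cut of `G`. -/
noncomputable def maxCut {V : Type*} [Fintype V] (G : SimpleGraph V) : ℕ :=
  sSup { m : ℕ | ∃ X : Set (Sym2 V), IsCut G X ∧ m = X.ncard }

/-- The bipartite density `b(G) = MAXCUT(G)/|E(G)|`. -/
noncomputable def bipDensity {V : Type*} [Fintype V] (G : SimpleGraph V) : ℝ :=
  maxCut G / G.edgeSet.ncard

/-- The Kneser graph `K(n,k)` on `k`-subsets of `[n]`, with disjointness edges. -/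
def kneser (n k : ℕ) : SimpleGraph {s : Finset (Fin n) // s.card = k} :=
  SimpleGraph.fromRel (fun s t => Disjoint s.1 t.1)

/-!
If `n` cuts of `G` cover every edge at least `m` times, then double counting gives
`m |E| ≤ ∑ᵢ |Xᵢ| ≤ n · MAXCUT(G)`, i.e. `b(G) ≥ m/n`. In `K(n,k)` the `n` cuts
`δ({s | i ∈ s})`, `i ∈ [n]`, cover an edge `{s, t}` exactly at the `2k` points of `s ∪ t`.
-/

open Finset

section Cuts

variable {V : Type*} [Fintype V] {G : SimpleGraph V}

theorem IsCut.ncard_le_maxCut {X : Set (Sym2 V)} (hX : IsCut G X) : X.ncard ≤ maxCut G :=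
  le_csSup ⟨Nat.card (Sym2 V), by rintro _ ⟨Y, -, rfl⟩; exact Set.ncard_le_card Y⟩ ⟨X, hX, rfl⟩

theorem HasCover.mul_ncard_edgeSet_le {n m : ℕ} (hcov : HasCover G n m) :
    m * G.edgeSet.ncard ≤ n * maxCut G := by
  obtain ⟨X, hcut, hmult⟩ := hcov
  set E := G.edgeSet.toFinset
  calc m * G.edgeSet.ncard = ∑ _e ∈ E, m := by
        rw [Set.ncard_eq_toFinset_card', sum_const, smul_eq_mul, mul_comm]
    _ ≤ ∑ e ∈ E, #{i | e ∈ X i} := sum_le_sum fun e he => hmult e (Set.mem_toFinset.mp he)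
    _ = ∑ i, #{e ∈ E | e ∈ X i} :=
        sum_card_bipartiteAbove_eq_sum_card_bipartiteBelow (fun e i => e ∈ X i)
    _ ≤ ∑ _i : Fin n, maxCut G := sum_le_sum fun i _ => by
        calc #{e ∈ E | e ∈ X i} = (↑{e ∈ E | e ∈ X i} : Set (Sym2 V)).ncard :=
              (Set.ncard_coe_finset _).symm
          _ ≤ (X i).ncard :=
              Set.ncard_le_ncard (fun e he => (mem_filter.mp he).2) (Set.toFinite _)
          _ ≤ maxCut G := (hcut i).ncard_le_maxCut
    _ = n * maxCut G := by simp

theorem HasCover.div_le_bipDensity {n m : ℕ} (hcov : HasCover G n m)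
    (hE : G.edgeSet.Nonempty) : (m : ℝ) / n ≤ bipDensity G := by
  have hEpos : (0 : ℝ) < G.edgeSet.ncard := by
    exact_mod_cast (Set.ncard_pos (Set.toFinite _)).mpr hE
  rcases n.eq_zero_or_pos with rfl | hn
  · rw [Nat.cast_zero, div_zero, bipDensity]
    positivity
  rw [bipDensity, div_le_div_iff₀ (by exact_mod_cast hn) hEpos]
  calc (m : ℝ) * G.edgeSet.ncard ≤ n * maxCut G := by exact_mod_cast hcov.mul_ncard_edgeSet_le
    _ = maxCut G * n := mul_comm _ _

end Cuts

section Kneser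

variable {n k : ℕ}

theorem kneser_adj {s t : {s : Finset (Fin n) // s.card = k}} :
    (kneser n k).Adj s t ↔ s ≠ t ∧ Disjoint s.1 t.1 := by
  rw [kneser, SimpleGraph.fromRel_adj, disjoint_comm (a := t.1), or_self]

theorem kneser_hasCover (n k : ℕ) : HasCover (kneser n k) n (2 * k) := by
  let W : Fin n → Set {s : Finset (Fin n) // s.card = k} := fun i => {s | i ∈ s.1}
  refine ⟨fun i => {e | e ∈ (kneser n k).edgeSet ∧ ∃ a b, e = s(a, b) ∧ a ∈ W i ∧ b ∉ W i},
    fun i => ⟨W i, rfl⟩, fun e he => ?_⟩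
  induction e using Sym2.ind with
  | _ s t =>
    have hst : Disjoint s.1 t.1 := (kneser_adj.mp he).2
    calc 2 * k = #(s.1 ∪ t.1) := by rw [card_union_of_disjoint hst, s.2, t.2, two_mul]
      _ ≤ _ := card_le_card fun i hi => ?_
    simp only [mem_filter, mem_univ, true_and, Set.mem_ofPred_eq]
    refine ⟨he, ?_⟩
    rcases mem_union.mp hi with hi | hi
    · exact ⟨s, t, rfl, hi, disjoint_left.mp hst hi⟩
    · exact ⟨t, s, Sym2.eq_swap, hi, disjoint_right.mp hst hi⟩

theorem kneser_edgeSet_nonempty (hk : 0 < k) (hkn : 2 * k ≤ n) :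
    (kneser n k).edgeSet.Nonempty := by
  obtain ⟨u, -, hu⟩ := exists_subset_card_eq (s := (univ : Finset (Fin n))) (n := 2 * k)
    (by simpa using hkn)
  obtain ⟨s, hsu, hs⟩ := exists_subset_card_eq (s := u) (n := k) (by omega)
  have ht : #(u \ s) = k := by rw [card_sdiff_of_subset hsu, hu, hs]; omega
  have hst : Disjoint s (u \ s) := disjoint_sdiff
  refine ⟨s(⟨s, hs⟩, ⟨u \ s, ht⟩), kneser_adj.mpr ⟨fun h => ?_, hst⟩⟩
  have hself : s = u \ s := congrArg Subtype.val h
  rw [← hself, disjoint_self] at hst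
  rw [hst, bot_eq_empty, card_empty] at hs
  omega

end Kneser

/-- For `0 < 2k ≤ n`, `b(K(n,k)) ≥ 2k/n`. -/
theorem bipDensity_kneser (n k : ℕ) (hk : 0 < k) (hkn : 2 * k ≤ n) :
    (2 * k : ℝ) / n ≤ bipDensity (kneser n k) := by
  exact_mod_cast (kneser_hasCover n k).div_le_bipDensity (kneser_edgeSet_nonempty hk hkn)
end

section
/- For integers 0 < 2k ≤ n, x(K(n,k)) ≤ n/(2k), and consequently for every graph G, x(G) ≤ χ_f(G)/2, where χ_f is the fractional chromatic number. -/
attribute [local instance] Classical.propDecidable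

/-- The fractional chromatic number, via homomorphisms into Kneser graphs. -/
noncomputable def fracChrom {V : Type*} (G : SimpleGraph V) : ℝ :=
  sInf { q : ℝ | ∃ n k : ℕ, 0 < k ∧ q = n / k ∧ Nonempty (G →g kneser n k) }

/-!
A homomorphism `f : G →g K(n,k)` labels every vertex with a `k`-subset of `[n]`, adjacent
vertices receiving disjoint labels. Each `i ∈ [n]` gives the cut around `{v | i ∈ f v}`, and an
edge `uv` lies in exactly `|f u ∆ f v| = 2k` of these `n` cuts, so `x(G) ≤ n/(2k)`. Taking
`f = id` bounds `x(K(n,k))`; taking the infimum over all `f` gives `x(G) ≤ χ_f(G)/2`.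
-/

open SimpleGraph Finset

lemma kneser_adj_iff {n k : ℕ} {s t : {s : Finset (Fin n) // s.card = k}} :
    (kneser n k).Adj s t ↔ s ≠ t ∧ Disjoint s.1 t.1 := by
  rw [kneser, fromRel_adj, disjoint_comm (a := t.1), or_self]

section LabelCut

variable {V α : Type*} (G : SimpleGraph V) (f : V → Finset α)

def labelCut (i : α) : Set (Sym2 V) :=
  {e | e ∈ G.edgeSet ∧ ∃ a b, e = s(a, b) ∧ i ∈ f a ∧ i ∉ f b}

lemma isCut_labelCut (i : α) : IsCut G (labelCut G f i) :=
  ⟨{v | i ∈ f v}, rfl⟩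

variable {G}

lemma mk_mem_labelCut_iff [DecidableEq α] {u v : V} (huv : G.Adj u v) (i : α) :
    s(u, v) ∈ labelCut G f i ↔ i ∈ symmDiff (f u) (f v) := by
  simp only [labelCut, Set.mem_ofPred_eq, mem_edgeSet, huv, true_and, Sym2.eq_iff,
    mem_symmDiff]
  constructor
  · rintro ⟨a, b, ⟨rfl, rfl⟩ | ⟨rfl, rfl⟩, ha, hb⟩
    exacts [Or.inl ⟨ha, hb⟩, Or.inr ⟨ha, hb⟩]
  · rintro (⟨hu, hv⟩ | ⟨hv, hu⟩)
    exacts [⟨u, v, Or.inl ⟨rfl, rfl⟩, hu, hv⟩, ⟨v, u, Or.inr ⟨rfl, rfl⟩, hv, hu⟩]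

lemma hasCover_of_le_card_symmDiff {n m : ℕ} (f : V → Finset (Fin n))
    (hf : ∀ u v, G.Adj u v → m ≤ #(symmDiff (f u) (f v))) : HasCover G n m := by
  refine ⟨labelCut G f, isCut_labelCut G f, fun e he => ?_⟩
  induction e with
  | h u v =>
    have huv : G.Adj u v := he
    have hfilter : univ.filter (s(u, v) ∈ labelCut G f ·) = symmDiff (f u) (f v) := by
      ext i
      simp only [mem_filter, mem_univ, true_and, mk_mem_labelCut_iff f huv]
    exact hfilter ▸ hf u v huv

end LabelCut

variable {V : Type*} {G : SimpleGraph V}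

lemma hasCover_of_hom {n k : ℕ} (f : G →g kneser n k) : HasCover G n (2 * k) := by
  refine hasCover_of_le_card_symmDiff (fun v => (f v).1) fun u v huv => ?_
  have hdisj : Disjoint (f u).1 (f v).1 := (kneser_adj_iff.mp (f.map_adj huv)).2
  rw [hdisj.symmDiff_eq_sup, sup_eq_union, card_union_of_disjoint hdisj, (f u).2, (f v).2,
    two_mul]

lemma cutCover_le_of_hasCover {n k : ℕ} (hk : 0 < k) (h : HasCover G n k) :
    cutCover G ≤ (n : ℝ) / k := by
  refine csInf_le ⟨0, ?_⟩ ⟨n, k, hk, rfl, h⟩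
  rintro q ⟨m, j, -, rfl, -⟩
  positivity

lemma cutCover_le_of_hom {n k : ℕ} (hk : 0 < k) (f : G →g kneser n k) :
    cutCover G ≤ (n : ℝ) / (2 * k) := by
  have h := cutCover_le_of_hasCover (by omega) (hasCover_of_hom f)
  rwa [Nat.cast_mul, Nat.cast_ofNat] at h

lemma nonempty_hom_kneser_one [Finite V] :
    Nonempty (G →g kneser (Nat.card V) 1) := by
  let e := Finite.equivFin V
  refine ⟨⟨fun v => ⟨{e v}, card_singleton _⟩, fun {u v} huv => ?_⟩⟩
  have he : e u ≠ e v := e.injective.ne huv.ne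
  refine kneser_adj_iff.mpr ⟨fun h => he (singleton_injective (congrArg Subtype.val h)), ?_⟩
  simpa using he

lemma cutCover_le_fracChrom_div_two [Finite V] :
    cutCover G ≤ fracChrom G / 2 := by
  rw [le_div_iff₀ two_pos, fracChrom]
  obtain ⟨f⟩ := nonempty_hom_kneser_one (G := G)
  refine le_csInf ⟨_, Nat.card V, 1, one_pos, rfl, ⟨f⟩⟩ ?_
  rintro q ⟨n, k, hk, rfl, ⟨f⟩⟩
  have h := cutCover_le_of_hom hk f
  rw [div_mul_eq_div_div_swap] at h
  linarith

/-- `x(K(n,k)) ≤ n/(2k)` for `0 < 2k ≤ n`; consequently `x(G) ≤ χ_f(G)/2`. -/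
theorem cutCover_kneser_and_fracChrom :
    (∀ n k : ℕ, 0 < k → 2 * k ≤ n → cutCover (kneser n k) ≤ (n : ℝ) / (2 * k)) ∧
    (∀ (V : Type) (_ : Fintype V) (G : SimpleGraph V), G.edgeSet.Nonempty →
      cutCover G ≤ fracChrom G / 2) :=
  ⟨fun _ _ hk _ => cutCover_le_of_hom hk Hom.id,
    fun _ _ _ _ => cutCover_le_fracChrom_div_two⟩
end

section
/- If G' and G'' are graphs sharing at most one vertex, then x(G' ∪ G'') = max{x(G'), x(G'')}. -/
attribute [local instance] Classical.propDecidable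

/-!
The inequality `≥` is monotonicity of `cutCover` under subgraphs. For `≤`, take covers of `G'`
and `G''` by `n₁` and `n₂` cuts of multiplicities `k₁` and `k₂`. Repeating them brings both to
multiplicity `k₁ k₂`, and padding with empty cuts to the common length `max (k₂ n₁) (k₁ n₂)`; then
the `i`-th cuts of the two covers are glued into one cut of `G' ⊔ G''`. Vertex sets `W'` and `W''`
can be glued because the graphs share at most one vertex: after replacing `W''` by its
complement, which has the same cut, they agree there.
-/

open SimpleGraph Finset

section

variable {V : Type*}

def crossing (W : Set V) : Set (Sym2 V) :=
  {e | ∃ a b, e = s(a, b) ∧ a ∈ W ∧ b ∉ W}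

@[simp]
lemma mk_mem_crossing {W : Set V} {a b : V} : s(a, b) ∈ crossing W ↔ ¬(a ∈ W ↔ b ∈ W) := by
  constructor
  · rintro ⟨x, y, hxy, hx, hy⟩
    rcases Sym2.eq_iff.mp hxy with ⟨rfl, rfl⟩ | ⟨rfl, rfl⟩ <;> tauto
  · intro h
    by_cases ha : a ∈ W
    · exact ⟨a, b, rfl, ha, by tauto⟩
    · exact ⟨b, a, Sym2.eq_swap, by tauto, ha⟩

lemma crossing_compl (W : Set V) : crossing Wᶜ = crossing W := by
  ext e
  induction e with
  | h a b => simp only [mk_mem_crossing, Set.mem_compl_iff]; tauto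

lemma mem_crossing_iff_of_inter_support_eq {G : SimpleGraph V} {W W' : Set V}
    (hW : W ∩ G.support = W' ∩ G.support) {e : Sym2 V} (he : e ∈ G.edgeSet) :
    e ∈ crossing W ↔ e ∈ crossing W' := by
  induction e with
  | h a b =>
    have hmem : ∀ v ∈ G.support, (v ∈ W ↔ v ∈ W') := fun v hv => by
      simpa [hv] using Set.ext_iff.mp hW v
    simp only [mk_mem_crossing, hmem a ⟨b, he⟩, hmem b ⟨a, (G.mem_edgeSet.mp he).symm⟩]

lemma hasCover_iff {G : SimpleGraph V} {n k : ℕ} :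
    HasCover G n k ↔ ∃ W : Fin n → Set V, ∀ e ∈ G.edgeSet, k ≤ #{i | e ∈ crossing (W i)} := by
  constructor
  · rintro ⟨X, hX, hcov⟩
    choose W hW using hX
    refine ⟨W, fun e he => (hcov e he).trans (card_le_card fun i hi => ?_)⟩
    simp only [mem_filter, mem_univ, true_and, hW i] at hi ⊢
    exact hi.2
  · rintro ⟨W, hcov⟩
    refine ⟨fun i => G.edgeSet ∩ crossing (W i), fun i => ⟨W i, rfl⟩, fun e he => ?_⟩
    exact (hcov e he).trans (card_le_card fun i hi => by simpa [he] using hi)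

lemma HasCover.of_fintype {G : SimpleGraph V} {ι : Type*} [Fintype ι] {k : ℕ} (W : ι → Set V)
    (hcov : ∀ e ∈ G.edgeSet, k ≤ #{i | e ∈ crossing (W i)}) : HasCover G (Fintype.card ι) k := by
  let σ := Fintype.equivFin ι
  refine hasCover_iff.mpr ⟨W ∘ σ.symm, fun e he => (hcov e he).trans_eq ?_⟩
  exact card_equiv σ fun i => by simp

lemma hasCover_card [Fintype V] (G : SimpleGraph V) : HasCover G (Fintype.card V) 2 := by
  refine HasCover.of_fintype (fun v => {v}) fun e he => ?_
  induction e with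
  | h a b =>
    have hab : a ≠ b := G.ne_of_adj he
    calc 2 = #{a, b} := (card_pair hab).symm
      _ ≤ _ := card_le_card fun v hv => by
        rcases mem_insert.mp hv with rfl | hv
        · simp [hab.symm]
        · simp [mem_singleton.mp hv, hab]

lemma HasCover.anti {G H : SimpleGraph V} (hGH : G ≤ H) {n k : ℕ} (h : HasCover H n k) :
    HasCover G n k := by
  obtain ⟨W, hcov⟩ := hasCover_iff.mp h
  exact hasCover_iff.mpr ⟨W, fun e he => hcov e (edgeSet_mono hGH he)⟩

lemma HasCover.mono_card {G : SimpleGraph V} {n n' k : ℕ} (hn : n ≤ n') (h : HasCover G n k) :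
    HasCover G n' k := by
  obtain ⟨d, rfl⟩ := Nat.exists_eq_add_of_le hn
  obtain ⟨W, hcov⟩ := hasCover_iff.mp h
  simpa using HasCover.of_fintype (ι := Fin n ⊕ Fin d) (Sum.elim W fun _ => ∅) fun e he =>
    (hcov e he).trans <| card_le_card_of_injOn Sum.inl (fun i hi => by simpa using hi)
      Sum.inl_injective.injOn

lemma HasCover.mul {G : SimpleGraph V} {n k : ℕ} (m : ℕ) (h : HasCover G n k) :
    HasCover G (m * n) (m * k) := by
  obtain ⟨W, hcov⟩ := hasCover_iff.mp h
  simpa using HasCover.of_fintype (ι := Fin m × Fin n) (fun p => W p.2) fun e he => by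
    calc m * k ≤ #(univ ×ˢ univ.filter fun i => e ∈ crossing (W i)) := by
          simpa using Nat.mul_le_mul_left m (hcov e he)
      _ ≤ _ := card_le_card fun p hp => by simp_all

lemma Set.inter_eq_or_inter_eq_compl_of_subsingleton {S : Set V} (hS : S.Subsingleton)
    (W W' : Set V) : W ∩ S = W' ∩ S ∨ W ∩ S = W'ᶜ ∩ S := by
  rcases hS.eq_empty_or_singleton with rfl | ⟨v, rfl⟩
  · simp
  · by_cases hW : v ∈ W <;> by_cases hW' : v ∈ W' <;> simp [hW, hW']

lemma Set.exists_inter_eq_inter_eq {A B W W' : Set V} (h : W ∩ (A ∩ B) = W' ∩ (A ∩ B)) :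
    ∃ U, U ∩ A = W ∩ A ∧ U ∩ B = W' ∩ B := by
  refine ⟨W ∩ A ∪ W' ∩ B, ?_, ?_⟩ <;> ext v <;> have := Set.ext_iff.mp h v <;>
    simp only [Set.mem_inter_iff, Set.mem_union] at this ⊢ <;> tauto

lemma exists_crossing_iff_of_subsingleton_support {G' G'' : SimpleGraph V}
    (h : (G'.support ∩ G''.support).Subsingleton) (W' W'' : Set V) :
    ∃ W, (∀ e ∈ G'.edgeSet, e ∈ crossing W ↔ e ∈ crossing W') ∧
      ∀ e ∈ G''.edgeSet, e ∈ crossing W ↔ e ∈ crossing W'' := by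
  -- Complementing `W''` does not change its cut, so it may be made to agree with `W'` at the
  -- shared vertex.
  obtain ⟨U, hU, hagree⟩ : ∃ U, crossing U = crossing W'' ∧
      W' ∩ (G'.support ∩ G''.support) = U ∩ (G'.support ∩ G''.support) := by
    rcases Set.inter_eq_or_inter_eq_compl_of_subsingleton h W' W'' with hc | hc
    · exact ⟨W'', rfl, hc⟩
    · exact ⟨W''ᶜ, crossing_compl W'', hc⟩
  obtain ⟨W, h', h''⟩ := Set.exists_inter_eq_inter_eq hagree
  exact ⟨W, fun e he => mem_crossing_iff_of_inter_support_eq h' he,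
    fun e he => hU ▸ mem_crossing_iff_of_inter_support_eq h'' he⟩

lemma HasCover.sup {G' G'' : SimpleGraph V} (h : (G'.support ∩ G''.support).Subsingleton)
    {n k : ℕ} (h' : HasCover G' n k) (h'' : HasCover G'' n k) : HasCover (G' ⊔ G'') n k := by
  obtain ⟨W', hcov'⟩ := hasCover_iff.mp h'
  obtain ⟨W'', hcov''⟩ := hasCover_iff.mp h''
  choose W hW' hW'' using fun i => exists_crossing_iff_of_subsingleton_support h (W' i) (W'' i)
  refine hasCover_iff.mpr ⟨W, fun e he => ?_⟩
  rcases (edgeSet_sup G' G'' ▸ he : e ∈ G'.edgeSet ∪ G''.edgeSet) with he | he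
  · simpa only [hW' _ e he] using hcov' e he
  · simpa only [hW'' _ e he] using hcov'' e he

lemma HasCover.sup_mul {G' G'' : SimpleGraph V} (h : (G'.support ∩ G''.support).Subsingleton)
    {n₁ n₂ k₁ k₂ : ℕ} (h₁ : HasCover G' n₁ k₁) (h₂ : HasCover G'' n₂ k₂) :
    HasCover (G' ⊔ G'') (max (k₂ * n₁) (k₁ * n₂)) (k₁ * k₂) :=
  .sup h ((mul_comm k₂ k₁ ▸ h₁.mul k₂).mono_card (le_max_left _ _))
    ((h₂.mul k₁).mono_card (le_max_right _ _))

lemma cutCover_le_div {G : SimpleGraph V} {n k : ℕ} (hk : 0 < k) (h : HasCover G n k) :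
    cutCover G ≤ n / k :=
  csInf_le ⟨0, by rintro q ⟨n, k, -, rfl, -⟩; positivity⟩ ⟨n, k, hk, rfl, h⟩

lemma nonempty_hasCover_div [Fintype V] (G : SimpleGraph V) :
    {q : ℝ | ∃ n k : ℕ, 0 < k ∧ q = n / k ∧ HasCover G n k}.Nonempty :=
  ⟨_, _, 2, two_pos, rfl, hasCover_card G⟩

lemma le_cutCover [Fintype V] {G : SimpleGraph V} {c : ℝ}
    (hc : ∀ n k : ℕ, 0 < k → HasCover G n k → c ≤ n / k) : c ≤ cutCover G :=
  le_csInf (nonempty_hasCover_div G) fun _ ⟨n, k, hk, hq, h⟩ => hq ▸ hc n k hk h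

lemma exists_hasCover_div_lt [Fintype V] (G : SimpleGraph V) {ε : ℝ} (hε : 0 < ε) :
    ∃ n k : ℕ, 0 < k ∧ HasCover G n k ∧ (n : ℝ) / k < cutCover G + ε := by
  obtain ⟨_, ⟨n, k, hk, rfl, h⟩, hlt⟩ :=
    Real.lt_sInf_add_pos (nonempty_hasCover_div G) hε
  exact ⟨n, k, hk, h, hlt⟩

lemma cutCover_mono [Fintype V] {G H : SimpleGraph V} (hGH : G ≤ H) :
    cutCover G ≤ cutCover H :=
  le_cutCover fun _ _ hk h => cutCover_le_div hk (h.anti hGH)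

lemma cutCover_sup_le {G' G'' : SimpleGraph V} (h : (G'.support ∩ G''.support).Subsingleton)
    {n₁ n₂ k₁ k₂ : ℕ} (hk₁ : 0 < k₁) (hk₂ : 0 < k₂) (h₁ : HasCover G' n₁ k₁)
    (h₂ : HasCover G'' n₂ k₂) : cutCover (G' ⊔ G'') ≤ max ((n₁ : ℝ) / k₁) ((n₂ : ℝ) / k₂) := by
  calc cutCover (G' ⊔ G'') ≤ (max (k₂ * n₁) (k₁ * n₂) : ℕ) / (k₁ * k₂ : ℕ) :=
        cutCover_le_div (Nat.mul_pos hk₁ hk₂) (h₁.sup_mul h h₂)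
    _ = max ((n₁ : ℝ) / k₁) ((n₂ : ℝ) / k₂) := by
        rw [Nat.cast_max, ← max_div_div_right (by positivity)]
        congr 1 <;> push_cast <;> field_simp

end

theorem cutCover_union_general {V : Type*} [Fintype V] (G' G'' : SimpleGraph V)
    (h : (G'.support ∩ G''.support).Subsingleton) :
    cutCover (G' ⊔ G'') = max (cutCover G') (cutCover G'') := by
  refine le_antisymm (le_of_forall_pos_lt_add fun ε hε => ?_)
    (max_le (cutCover_mono le_sup_left) (cutCover_mono le_sup_right))
  obtain ⟨n₁, k₁, hk₁, h₁, hlt₁⟩ := exists_hasCover_div_lt G' hε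
  obtain ⟨n₂, k₂, hk₂, h₂, hlt₂⟩ := exists_hasCover_div_lt G'' hε
  calc cutCover (G' ⊔ G'') ≤ max ((n₁ : ℝ) / k₁) ((n₂ : ℝ) / k₂) :=
        cutCover_sup_le h hk₁ hk₂ h₁ h₂
    _ < max (cutCover G' + ε) (cutCover G'' + ε) := max_lt_max hlt₁ hlt₂
    _ = max (cutCover G') (cutCover G'') + ε := max_add_add_right _ _ _

/-- If `G'` and `G''` share at most one vertex, then `x(G' ∪ G'') = max {x(G'), x(G'')}`. -/
theorem cutCover_union {V : Type*} [Fintype V] (G' G'' : SimpleGraph V)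
    (h : (G'.support ∩ G''.support).Subsingleton)
    (h' : G'.edgeSet.Nonempty) (h'' : G''.edgeSet.Nonempty) :
    cutCover (G' ⊔ G'') = max (cutCover G') (cutCover G'') :=
  cutCover_union_general G' G'' h
end

section
/- The graph Q_n^{=k} (vertices {0,1}^n, edges exactly at Hamming distance k), with k even and k ≤ n < 2k, has smallest adjacency eigenvalue equal to C(n,k)·(1 − 2k/n), attained by the character corresponding to a weight-1 vector. -/
/-!
The Walsh characters `T ↦ (-1) ^ #(S ∩ T)` diagonalise every matrix `f (S ∆ T)` on `Finset ι`, so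
the eigenvalues of `Q_n^{=k}` are the Krawtchouk sums `K_k(S) = ∑_{Z ⊆ U, #Z = k} (-1) ^ #(Z ∩ S)`,
`#U = n`, and `K_k({a}) = C(n-1, k) - C(n-1, k-1) = C(n, k) (1 - 2k/n)`. Complementing `Z` gives
`K_k(S) = (-1) ^ #S K_{n-k}(S)` with `2 (n - k) < n`; as `k` is even, `K_k(∅) = K_k(U) = C(n, k)`,
so it suffices that `|K_j(S)| ≤ K_j({a})` whenever `2 j < n` and `∅ ≠ S ⊊ U`.

That bound holds by induction on `n`: removing a point `u ∉ S` gives Pascal's rule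
`K_{j+1} = K'_{j+1} + K'_j` for `S` and `{a}` alike. When `n = 2 j + 3` the induction hypothesis
does not cover `K'_{j+1}`; instead, for `#S` odd (after possibly complementing `S`), the reflection
`j ↦ n - j` together with the vanishing of `K'_{j+1}(S)` at `n - 1 = 2 (j + 1)` gives
`K_{j+1}(S) = K'_j(S)`.
-/

attribute [local instance] Classical.propDecidable

/-- The graph `Q_n^{=k}` on `{0,1}^n`, with edges exactly at Hamming distance `k`. -/
def cubeEqGraph (n k : ℕ) : SimpleGraph (Fin n → Bool) :=
  SimpleGraph.fromRel (fun x y => hammingDist x y = k)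

open Finset
open scoped symmDiff

section Parity

variable {R : Type*} [Monoid R] [HasDistribNeg R]

lemma neg_one_pow_of_add_eq {a b c : ℕ} (h : a + b = c) : (-1 : R) ^ a = (-1) ^ c * (-1) ^ b := by
  rw [← h, pow_add, mul_assoc, ← pow_add, ← two_mul, pow_mul]
  simp

lemma neg_one_pow_card_symmDiff {α : Type*} [DecidableEq α] (s t : Finset α) :
    (-1 : R) ^ #(s ∆ t) = (-1) ^ #s * (-1) ^ #t := by
  have h : #(s ∆ t) + 2 * #(s ∩ t) = #s + #t := by
    rw [symmDiff_eq_sup_sdiff_inf, ← card_union_add_card_inter, sup_eq_union, inf_eq_inter,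
      card_sdiff_of_subset inter_subset_union]
    have hle := card_le_card (inter_subset_union (s := s) (t := t))
    omega
  rw [← pow_add, neg_one_pow_of_add_eq h, pow_mul]
  simp

lemma neg_one_pow_card_symmDiff_inter {α : Type*} [DecidableEq α] (s t u : Finset α) :
    (-1 : R) ^ #((s ∆ t) ∩ u) = (-1) ^ #(s ∩ u) * (-1) ^ #(t ∩ u) := by
  rw [← neg_one_pow_card_symmDiff]
  exact congrArg (fun v => (-1 : R) ^ #v) (inf_symmDiff_distrib_right s t u)

end Parity

section SumPowersetCard

variable {α M : Type*} [DecidableEq α] [AddCommMonoid M]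

lemma sum_powersetCard_succ_insert {a : α} {s : Finset α} (ha : a ∉ s) (k : ℕ)
    (f : Finset α → M) :
    ∑ Z ∈ (insert a s).powersetCard (k + 1), f Z =
      ∑ Z ∈ s.powersetCard (k + 1), f Z + ∑ Z ∈ s.powersetCard k, f (insert a Z) := by
  have notMem {Z} (hZ : Z ∈ s.powersetCard k) : a ∉ Z := fun h => ha ((mem_powersetCard.1 hZ).1 h)
  rw [powersetCard_succ_insert ha, sum_union, sum_image]
  · intro Z₁ h₁ Z₂ h₂ h
    rw [← erase_insert (notMem h₁), ← erase_insert (notMem h₂), h]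
  · refine disjoint_right.2 fun Z hZ hZ' => ?_
    obtain ⟨W, -, rfl⟩ := mem_image.1 hZ
    exact ha ((mem_powersetCard.1 hZ').1 (mem_insert_self a W))

end SumPowersetCard

section Krawtchouk

variable {α : Type*} [DecidableEq α] {U S : Finset α} {k : ℕ}

def krawtchouk (U : Finset α) (k : ℕ) (S : Finset α) : ℤ :=
  ∑ Z ∈ U.powersetCard k, (-1) ^ #(Z ∩ S)

@[simp] lemma krawtchouk_zero : krawtchouk U 0 S = 1 := by
  simp [krawtchouk]

@[simp] lemma krawtchouk_empty : krawtchouk U k ∅ = (#U).choose k := by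
  simp [krawtchouk]

lemma krawtchouk_succ_of_notMem {u : α} (hu : u ∈ U) (huS : u ∉ S) :
    krawtchouk U (k + 1) S = krawtchouk (U.erase u) (k + 1) S + krawtchouk (U.erase u) k S := by
  conv_lhs => rw [krawtchouk, ← insert_erase hu]
  rw [sum_powersetCard_succ_insert (notMem_erase u U)]
  simp only [insert_inter_of_notMem huS, krawtchouk]

lemma krawtchouk_succ_of_mem {u : α} (hu : u ∈ U) (huS : u ∈ S) :
    krawtchouk U (k + 1) S =
      krawtchouk (U.erase u) (k + 1) (S.erase u) - krawtchouk (U.erase u) k (S.erase u) := by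
  conv_lhs => rw [krawtchouk, ← insert_erase hu]
  rw [sum_powersetCard_succ_insert (notMem_erase u U), sub_eq_add_neg, krawtchouk, krawtchouk,
    ← sum_neg_distrib]
  have notMem {j Z} (hZ : Z ∈ (U.erase u).powersetCard j) : u ∉ Z :=
    fun h => notMem_erase u U ((mem_powersetCard.1 hZ).1 h)
  congr 1 <;> refine sum_congr rfl fun Z hZ => ?_
  · rw [inter_erase, erase_eq_of_notMem fun h => notMem hZ (mem_inter.1 h).1]
  · rw [insert_inter_of_mem huS, card_insert_of_notMem fun h => notMem hZ (mem_inter.1 h).1,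
      inter_erase, erase_eq_of_notMem fun h => notMem hZ (mem_inter.1 h).1, pow_succ, mul_neg_one]

lemma krawtchouk_singleton {a : α} (ha : a ∈ U) :
    krawtchouk U (k + 1) {a} = (#U - 1).choose (k + 1) - (#U - 1).choose k := by
  rw [krawtchouk_succ_of_mem ha (mem_singleton_self a), erase_singleton, krawtchouk_empty,
    krawtchouk_empty, card_erase_of_mem ha]

lemma krawtchouk_sdiff (U S : Finset α) (k : ℕ) :
    krawtchouk U k (U \ S) = (-1) ^ k * krawtchouk U k S := by
  rw [krawtchouk, krawtchouk, mul_sum]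
  refine sum_congr rfl fun Z hZ => neg_one_pow_of_add_eq ?_
  obtain ⟨hZU, rfl⟩ := mem_powersetCard.1 hZ
  rw [← inter_sdiff_assoc, inter_eq_left.2 hZU, card_sdiff_add_card_inter]

lemma krawtchouk_card_sub (hS : S ⊆ U) (hk : k ≤ #U) :
    krawtchouk U (#U - k) S = (-1) ^ #S * krawtchouk U k S := by
  rw [krawtchouk, krawtchouk, mul_sum]
  refine sum_nbij' (U \ ·) (U \ ·) ?_ ?_ ?_ ?_ ?_
  · simp only [mem_powersetCard]
    rintro Z ⟨hZU, hZ⟩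
    exact ⟨sdiff_subset, by rw [card_sdiff_of_subset hZU, hZ]; omega⟩
  · simp only [mem_powersetCard]
    rintro Z ⟨hZU, hZ⟩
    exact ⟨sdiff_subset, by rw [card_sdiff_of_subset hZU, hZ]⟩
  · exact fun Z hZ => Finset.sdiff_sdiff_eq_self (mem_powersetCard.1 hZ).1
  · exact fun Z hZ => Finset.sdiff_sdiff_eq_self (mem_powersetCard.1 hZ).1
  · refine fun Z _ => neg_one_pow_of_add_eq ?_
    rw [sdiff_inter_right_comm, inter_eq_right.2 hS, inter_comm, add_comm,
      card_sdiff_add_card_inter]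

lemma krawtchouk_self : krawtchouk U k U = (-1) ^ k * (#U).choose k := by
  simpa using krawtchouk_sdiff U ∅ k

lemma abs_krawtchouk_sdiff (U S : Finset α) (k : ℕ) :
    |krawtchouk U k (U \ S)| = |krawtchouk U k S| := by
  rw [krawtchouk_sdiff, abs_mul, abs_neg_one_pow, one_mul]

lemma krawtchouk_eq_zero_of_odd (hU : #U = 2 * k) (hS : S ⊆ U) (hodd : Odd #S) :
    krawtchouk U k S = 0 := by
  have h := krawtchouk_card_sub hS (k := k) (by omega)
  rw [show #U - k = k by omega, hodd.neg_one_pow] at h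
  omega

lemma krawtchouk_succ_eq_of_card_eq {u : α} (hU : #U = 2 * k + 3) (hS : S ⊆ U)
    (hodd : Odd #S) (hu : u ∈ U) (huS : u ∉ S) :
    krawtchouk U (k + 1) S = krawtchouk (U.erase u) k S := by
  have hU' : #(U.erase u) = 2 * (k + 1) := by rw [card_erase_of_mem hu]; omega
  have hSU' : S ⊆ U.erase u := subset_erase.2 ⟨hS, huS⟩
  have h₁ := krawtchouk_card_sub hS (k := k + 2) (by omega)
  have h₂ := krawtchouk_card_sub hSU' (k := k + 2) (by omega)
  rw [show #U - (k + 2) = k + 1 by omega, hodd.neg_one_pow] at h₁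
  rw [show #(U.erase u) - (k + 2) = k by omega, hodd.neg_one_pow] at h₂
  rw [h₁, h₂, krawtchouk_succ_of_notMem hu huS, krawtchouk_eq_zero_of_odd hU' hSU' hodd]
  ring

theorem abs_krawtchouk_le_singleton {j : ℕ} {a : α} (hj : 2 * j < #U) (hS₀ : S.Nonempty)
    (hSU : S ⊂ U) (ha : a ∈ U) : |krawtchouk U j S| ≤ krawtchouk U j {a} := by
  induction U using Finset.strongInduction generalizing j S a with
  | H U ih =>
  obtain _ | j := j
  · simp
  -- Passing to `U \ S` changes neither side; it leaves room for a point `u ∉ S` with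
  -- `S ⊊ U.erase u`, and makes `#S` odd when `#U = 2 * j + 3`.
  wlog hS : #S + 1 < #U ∧ (#U = 2 * j + 3 → Odd #S) generalizing S with H
  · have hcard : #(U \ S) = #U - #S := card_sdiff_of_subset hSU.subset
    have hSlt := card_lt_card hSU
    have hSpos := hS₀.card_pos
    rw [← abs_krawtchouk_sdiff]
    refine H (sdiff_nonempty.2 hSU.not_subset) (sdiff_ssubset hSU.subset hS₀) ?_
    simp only [hcard, Nat.odd_iff] at hS ⊢
    omega
  obtain ⟨b, hb⟩ := hS₀
  obtain ⟨u, hu, huS⟩ := exists_mem_notMem_of_card_lt_card (card_lt_card hSU)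
  have hbu : u ∉ ({b} : Finset α) := by
    rw [mem_singleton]
    rintro rfl
    exact huS hb
  have hcard : #(U.erase u) = #U - 1 := card_erase_of_mem hu
  have hSU' : S ⊂ U.erase u := (subset_erase.2 ⟨hSU.subset, huS⟩).ssubset_of_ne (by
    rintro rfl
    omega)
  have ih' (i : ℕ) (hi : 2 * i < #U - 1) :
      |krawtchouk (U.erase u) i S| ≤ krawtchouk (U.erase u) i {b} :=
    ih _ (erase_ssubset hu) (hcard ▸ hi) ⟨b, hb⟩ hSU' (hSU'.subset hb)
  rw [krawtchouk_singleton ha, ← krawtchouk_singleton (hSU.subset hb)]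
  rcases (by omega : 2 * j + 3 < #U ∨ #U = 2 * j + 3) with hint | hedge
  · rw [krawtchouk_succ_of_notMem hu huS, krawtchouk_succ_of_notMem hu hbu]
    exact (abs_add_le _ _).trans (add_le_add (ih' _ (by omega)) (ih' _ (by omega)))
  · rw [krawtchouk_succ_eq_of_card_eq hedge hSU.subset (hS.2 hedge) hu huS,
      krawtchouk_succ_eq_of_card_eq hedge (singleton_subset_iff.2 (hSU.subset hb)) (by simp) hu hbu]
    exact ih' _ (by omega)

theorem krawtchouk_singleton_le {a : α} (hk : Even k) (hkU : k ≤ #U) (hUk : #U < 2 * k)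
    (hS : S ⊆ U) (ha : a ∈ U) : krawtchouk U k {a} ≤ krawtchouk U k S := by
  have hj : 2 * (#U - k) < #U := by omega
  have hreflect : ∀ T ⊆ U, krawtchouk U k T = (-1) ^ #T * krawtchouk U (#U - k) T := by
    intro T hT
    rw [← krawtchouk_card_sub hT (by omega), Nat.sub_sub_self hkU]
  have haU : {a} ⊂ U := (singleton_subset_iff.2 ha).ssubset_of_ne fun h => by
    rw [← h, card_singleton] at hkU hUk
    obtain ⟨c, rfl⟩ := hk
    omega
  have hsingle : krawtchouk U k {a} = -krawtchouk U (#U - k) {a} := by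
    simp [hreflect {a} haU.subset]
  have hnonneg : 0 ≤ krawtchouk U (#U - k) {a} :=
    (abs_nonneg _).trans (abs_krawtchouk_le_singleton hj (singleton_nonempty a) haU ha)
  rcases S.eq_empty_or_nonempty with rfl | hS₀
  · rw [krawtchouk_empty]
    linarith
  rcases hS.eq_or_ssubset with rfl | hSU
  · rw [krawtchouk_self, hk.neg_one_pow]
    linarith
  rw [hsingle, hreflect S hS]
  calc _ ≤ -|krawtchouk U (#U - k) S| := neg_le_neg (abs_krawtchouk_le_singleton hj hS₀ hSU ha)
    _ ≤ _ := by simpa [abs_mul] using neg_abs_le ((-1) ^ #S * krawtchouk U (#U - k) S)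

end Krawtchouk

section Walsh

open Matrix

def walshMatrix (ι K : Type*) [DecidableEq ι] [Ring K] : Matrix (Finset ι) (Finset ι) K :=
  of fun S T => (-1) ^ #(S ∩ T)

def symmDiffMatrix {ι K : Type*} [DecidableEq ι] (f : Finset ι → K) :
    Matrix (Finset ι) (Finset ι) K :=
  of fun S T => f (S ∆ T)

variable {ι K : Type*} [Fintype ι] [DecidableEq ι]

lemma sum_neg_one_pow_card_inter [CommRing K] (D : Finset ι) :
    ∑ T : Finset ι, (-1 : K) ^ #(D ∩ T) = if D = ∅ then 2 ^ Fintype.card ι else 0 := by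
  have h := prod_one_add (f := fun i => if i ∈ D then (-1 : K) else 1) univ
  simp only [prod_ite, prod_const, one_pow, mul_one, powerset_univ, filter_mem_eq_inter,
    inter_comm _ D] at h
  rw [← h]
  split_ifs with hD
  · simp [hD, one_add_one_eq_two]
  · obtain ⟨d, hd⟩ := nonempty_iff_ne_empty.2 hD
    exact prod_eq_zero (mem_univ d) (by simp [hd])

variable [Field K]

lemma walshMatrix_mul_self :
    walshMatrix ι K * walshMatrix ι K = (2 ^ Fintype.card ι : K) • 1 := by
  ext S U
  simp only [walshMatrix, mul_apply, of_apply, inter_comm _ U, ← neg_one_pow_card_symmDiff_inter,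
    sum_neg_one_pow_card_inter, symmDiff_eq_empty, Matrix.smul_apply, Matrix.one_apply]
  split_ifs <;> simp

lemma symmDiffMatrix_mul_walshMatrix (f : Finset ι → K) :
    symmDiffMatrix f * walshMatrix ι K =
      walshMatrix ι K * diagonal fun U => ∑ Z, f Z * (-1) ^ #(Z ∩ U) := by
  ext S U
  rw [mul_diagonal, mul_apply, mul_sum]
  refine Fintype.sum_equiv ((symmDiff_right_involutive S).toPerm) _ _ fun T => ?_
  simp only [walshMatrix, symmDiffMatrix, of_apply, Function.Involutive.coe_toPerm,
    neg_one_pow_card_symmDiff_inter]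
  have h : ((-1 : K) ^ #(S ∩ U)) ^ 2 = 1 := by rw [← pow_mul, pow_mul', neg_one_sq, one_pow]
  linear_combination (-f (S ∆ T) * (-1) ^ #(T ∩ U)) * h

theorem spectrum_symmDiffMatrix [NeZero (2 : K)] (f : Finset ι → K) :
    spectrum K (symmDiffMatrix f) = Set.range fun U => ∑ Z, f Z * (-1) ^ #(Z ∩ U) := by
  have hc : (2 ^ Fintype.card ι : K) ≠ 0 := pow_ne_zero _ two_ne_zero
  let H : (Matrix (Finset ι) (Finset ι) K)ˣ :=
    { val := walshMatrix ι K
      inv := (2 ^ Fintype.card ι : K)⁻¹ • walshMatrix ι K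
      val_inv := by
        rw [mul_smul_comm, walshMatrix_mul_self, smul_smul, inv_mul_cancel₀ hc, one_smul]
      inv_val := by
        rw [smul_mul_assoc, walshMatrix_mul_self, smul_smul, inv_mul_cancel₀ hc, one_smul] }
  have hconj : symmDiffMatrix f =
      H.val * diagonal (fun U => ∑ Z, f Z * (-1) ^ #(Z ∩ U)) * (H⁻¹).val := by
    calc _ = symmDiffMatrix f * H.val * (H⁻¹).val := by rw [mul_assoc, H.mul_inv, mul_one]
      _ = _ := by rw [symmDiffMatrix_mul_walshMatrix]
  rw [hconj, spectrum.units_conjugate, spectrum_diagonal]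

end Walsh

section Cube

open Matrix

variable {ι : Type*} [Fintype ι] [DecidableEq ι]

variable (ι) in
def boolFunEquivFinset : (ι → Bool) ≃ Finset ι where
  toFun x := {i | x i}
  invFun S i := i ∈ S
  left_inv x := by ext i; simp
  right_inv S := by ext i; simp

lemma hammingDist_eq_card_symmDiff (x y : ι → Bool) :
    hammingDist x y = #(boolFunEquivFinset ι x ∆ boolFunEquivFinset ι y) := by
  unfold hammingDist
  congr 1
  ext i
  simp only [boolFunEquivFinset, Equiv.coe_fn_mk, mem_filter, mem_univ, true_and, mem_symmDiff]
  cases x i <;> cases y i <;> simp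

lemma cubeEqGraph_adj {n k : ℕ} (hk : k ≠ 0) {x y : Fin n → Bool} :
    (cubeEqGraph n k).Adj x y ↔ hammingDist x y = k := by
  rw [cubeEqGraph, SimpleGraph.fromRel_adj, hammingDist_comm y x, or_self, and_iff_right_iff_imp]
  rintro h rfl
  exact hk (h ▸ hammingDist_self x)

lemma reindex_adjMatrix_cubeEqGraph {K : Type*} [Field K] {n k : ℕ} (hk : k ≠ 0) :
    reindex (boolFunEquivFinset (Fin n)) (boolFunEquivFinset (Fin n))
        ((cubeEqGraph n k).adjMatrix K) =
      symmDiffMatrix fun Z => if #Z = k then 1 else 0 := by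
  ext S T
  simp [symmDiffMatrix, SimpleGraph.adjMatrix_apply, cubeEqGraph_adj hk,
    hammingDist_eq_card_symmDiff]

theorem spectrum_adjMatrix_cubeEqGraph {K : Type*} [Field K] [NeZero (2 : K)] {n k : ℕ}
    (hk : k ≠ 0) :
    spectrum K ((cubeEqGraph n k).adjMatrix K) =
      Set.range fun S : Finset (Fin n) => (krawtchouk univ k S : K) := by
  rw [← AlgEquiv.spectrum_eq (reindexAlgEquiv K K (boolFunEquivFinset (Fin n))),
    coe_reindexAlgEquiv, reindex_adjMatrix_cubeEqGraph hk, spectrum_symmDiffMatrix]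
  congr! with U
  rw [krawtchouk, Int.cast_sum]
  simp only [ite_mul, one_mul, zero_mul, sum_ite, sum_const_zero, add_zero]
  rw [powersetCard_eq_filter, powerset_univ]
  push_cast
  -- the two filters differ only in their decidability instance for `#x = k`
  rfl

end Cube

lemma choose_succ_succ_mul_one_sub_div (m j : ℕ) :
    ((m + 1).choose (j + 1) : ℝ) * (1 - 2 * (j + 1) / (m + 1)) = m.choose (j + 1) - m.choose j := by
  have h₁ : ((m + 1) * m.choose j : ℝ) = (m + 1).choose (j + 1) * (j + 1) := by
    exact_mod_cast Nat.add_one_mul_choose_eq m j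
  have h₂ : ((m + 1).choose (j + 1) : ℝ) = m.choose j + m.choose (j + 1) := by
    exact_mod_cast Nat.choose_succ_succ' m j
  field_simp
  linear_combination 2 * h₁ + (m + 1) * h₂

lemma sum_range_neg_one_pow_mul_choose_one (m j : ℕ) :
    ∑ t ∈ range (j + 2), (-1 : ℝ) ^ t * (Nat.choose 1 t) * (m.choose (j + 1 - t)) =
      m.choose (j + 1) - m.choose j := by
  rw [sum_range_succ', sum_range_succ', sum_eq_zero fun t _ => ?_]
  · simp only [zero_add, pow_zero, pow_one, Nat.choose_zero_right,
      Nat.choose_one_right, Nat.sub_zero, Nat.add_sub_cancel, Nat.cast_one]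
    ring
  · rw [Nat.choose_eq_zero_of_lt (by omega : 1 < t + 1 + 1)]
    simp

/-- For `k` even, `k ≤ n < 2k`, the smallest adjacency eigenvalue of `Q_n^{=k}` is
`C(n,k)(1 − 2k/n)`, attained by the Krawtchouk value at a weight-1 vector. -/
theorem cubeEq_smallest_eigenvalue (n k : ℕ) (hk : Even k) (hkn : k ≤ n) (hn : n < 2 * k) :
    ((n.choose k : ℝ) * (1 - 2 * k / n) ∈
        spectrum ℝ ((cubeEqGraph n k).adjMatrix ℝ)) ∧
    (∀ μ ∈ spectrum ℝ ((cubeEqGraph n k).adjMatrix ℝ),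
        (n.choose k : ℝ) * (1 - 2 * k / n) ≤ μ) ∧
    (n.choose k : ℝ) * (1 - 2 * k / n) =
      ∑ t ∈ Finset.range (k + 1),
        (-1 : ℝ) ^ t * (Nat.choose 1 t) * (Nat.choose (n - 1) (k - t)) := by
  obtain ⟨m, rfl⟩ : ∃ m, n = m + 1 := ⟨n - 1, by omega⟩
  obtain ⟨j, rfl⟩ : ∃ j, k = j + 1 := ⟨k - 1, by omega⟩
  have hval : ((m + 1).choose (j + 1) : ℝ) * (1 - 2 * ↑(j + 1) / ↑(m + 1)) =
      krawtchouk univ (j + 1) {(0 : Fin (m + 1))} := by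
    rw [krawtchouk_singleton (mem_univ 0), card_univ, Fintype.card_fin]
    push_cast
    exact choose_succ_succ_mul_one_sub_div m j
  rw [spectrum_adjMatrix_cubeEqGraph (by omega : j + 1 ≠ 0), hval]
  refine ⟨⟨{0}, rfl⟩, ?_, ?_⟩
  · rintro _ ⟨S, rfl⟩
    exact Int.cast_le.2 <| krawtchouk_singleton_le hk (by simpa using hkn) (by simpa using hn)
      (subset_univ S) (mem_univ 0)
  · rw [← hval, Nat.add_sub_cancel]
    push_cast
    rw [choose_succ_succ_mul_one_sub_div]
    exact (sum_range_neg_one_pow_mul_choose_one m j).symm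
end
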